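/- arXiv:math/0202281 — 6 statements merged into one kernel-verified Lean document; each statement's English description precedes it below -/
import Mathlib

section
/- Two finite Alexander quandles M and N of the same cardinality are isomorphic as quandles if and only if there is an isomorphism of Λ-modules from the submodule (1−t)M onto the submodule (1−t)N. -/
/-!
Write `u = 1 - t`. A quandle isomorphism `f`, shifted so that `f 0 = 0`, commutes with `t` and
with `u`, and since `t` is invertible it is additive on `uM`; so it restricts to a
`Λ`-isomorphism `uM ≃ uN`.

Conversely, a choice of coset representatives `σ` identifies `M` with `(M/uM) × uM`, and in these
coordinates the quandle operation only involves the module `uM` and the classes of `u σ x` in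
`uM/u(uM)`. Given `e : uM ≃ uN`, the sets `M/uM` and `N/uN` have the same size, and counting
fibres of the two surjections onto `uN/u(uN)` gives a bijection `G : M/uM ≃ N/uN` matching
these classes. The representatives on `N` can then be chosen with `u σ (G x) = e (u σ x)`, and
`m ↦ σ (G [m]) + e (m - σ [m])` is a quandle isomorphism.
-/

open LaurentPolynomial Function

local notation "Λ" => LaurentPolynomial ℤ

theorem AddMonoidHom.card_ker_mul_card_of_surjective {A Q : Type*} [AddGroup A] [AddGroup Q]
    {φ : A →+ Q} (hφ : Surjective φ) : Nat.card φ.ker * Nat.card Q = Nat.card A := by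
  rw [← φ.ker.card_mul_index, AddSubgroup.index_ker, φ.range_eq_top_of_surjective hφ,
    AddSubgroup.card_top]

theorem AddMonoidHom.exists_equiv_comp_eq_of_surjective {A B Q : Type*} [AddGroup A] [AddGroup B]
    [AddGroup Q] [Finite A] [Finite B] {φ : A →+ Q} {ψ : B →+ Q} (hφ : Surjective φ)
    (hψ : Surjective ψ) (hcard : Nat.card A = Nat.card B) :
    ∃ G : A ≃ B, ∀ a, ψ (G a) = φ a := by
  have : Finite Q := Finite.of_surjective φ hφ
  have hker : Nat.card φ.ker = Nat.card ψ.ker :=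
    Nat.eq_of_mul_eq_mul_right (Nat.card_pos (α := Q)) <| by
      rw [card_ker_mul_card_of_surjective hφ, card_ker_mul_card_of_surjective hψ, hcard]
  obtain ⟨eker⟩ := Finite.card_eq.mp hker
  exact ⟨Equiv.ofFiberEquiv fun q => (φ.fiberEquivKerOfSurjective hφ q).trans
    (eker.trans (ψ.fiberEquivKerOfSurjective hψ q).symm), Equiv.ofFiberEquiv_map _⟩

theorem LaurentPolynomial.map_smul_of_map_T_one_smul {A B : Type*} [AddCommGroup A]
    [Module Λ A] [AddCommGroup B] [Module Λ B] (f : A →+ B)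
    (hT : ∀ x, f ((T 1 : Λ) • x) = (T 1 : Λ) • f x) (p : Λ) (x : A) : f (p • x) = p • f x := by
  have hT_neg (x : A) : f ((T (-1) : Λ) • x) = (T (-1) : Λ) • f x :=
    calc f ((T (-1) : Λ) • x)
        = (T (-1) : Λ) • (T 1 : Λ) • f ((T (-1) : Λ) • x) := by rw [smul_smul, ← T_add]; simp
      _ = (T (-1) : Λ) • f x := by rw [← hT, smul_smul, ← T_add]; simp
  have hT_int (n : ℤ) : ∀ x, f ((T n : Λ) • x) = (T n : Λ) • f x := by
    induction n using Int.induction_on with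
    | zero => simp [T_zero]
    | succ k ih => intro x; rw [add_comm, T_add, mul_smul, mul_smul, hT, ih]
    | pred k ih => intro x; rw [sub_eq_neg_add, T_add, mul_smul, mul_smul, hT_neg, ih]
  induction p using LaurentPolynomial.induction_on' with
  | add p q hp hq => rw [add_smul, add_smul, map_add, hp, hq]
  | C_mul_T n a =>
    rw [C_eq_algebraMap, mul_smul, mul_smul, algebraMap_smul, algebraMap_smul, map_zsmul, hT_int]

section

variable {R : Type*} [CommRing R] {M N : Type*} [AddCommGroup M] [Module R M] [AddCommGroup N]
  [Module R N]

abbrev smulRange (r : R) (M : Type*) [AddCommGroup M] [Module R M] : Submodule R M :=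
  LinearMap.range (LinearMap.lsmul R M r)

def IsAlexanderHom (t : R) (f : M → N) : Prop :=
  ∀ a b, f (t • a + (1 - t) • b) = t • f a + (1 - t) • f b

namespace IsAlexanderHom

variable {t : R} {f : M → N}

theorem sub_const (hf : IsAlexanderHom t f) (c : N) :
    IsAlexanderHom t (fun m => f m - c) := by
  intro a b
  simp only [hf a b]
  module

theorem map_smul (hf : IsAlexanderHom t f) (h0 : f 0 = 0) (a : M) : f (t • a) = t • f a := by
  simpa [h0] using hf a 0

theorem map_one_sub_smul (hf : IsAlexanderHom t f) (h0 : f 0 = 0) (b : M) :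
    f ((1 - t) • b) = (1 - t) • f b := by
  simpa [h0] using hf 0 b

theorem map_add_one_sub_smul (hf : IsAlexanderHom t f) (h0 : f 0 = 0) (ht : IsUnit t)
    (a b : M) : f (a + (1 - t) • b) = f a + (1 - t) • f b := by
  obtain ⟨s, hs⟩ := ht.exists_right_inv
  calc f (a + (1 - t) • b) = f (t • s • a + (1 - t) • b) := by rw [smul_smul, hs, one_smul]
    _ = t • f (s • a) + (1 - t) • f b := hf _ _
    _ = f a + (1 - t) • f b := by rw [← hf.map_smul h0, smul_smul, hs, one_smul]

theorem map_mem_smulRange (hf : IsAlexanderHom t f) (h0 : f 0 = 0) {x : M}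
    (hx : x ∈ smulRange (1 - t) M) : f x ∈ smulRange (1 - t) N := by
  obtain ⟨b, rfl⟩ := hx
  exact ⟨f b, (hf.map_one_sub_smul h0 b).symm⟩

def smulRangeHom (hf : IsAlexanderHom t f) (h0 : f 0 = 0) (ht : IsUnit t) :
    smulRange (1 - t) M →+ smulRange (1 - t) N where
  toFun s := ⟨f s, hf.map_mem_smulRange h0 s.2⟩
  map_zero' := Subtype.ext h0
  map_add' := by
    rintro ⟨_, a, rfl⟩ ⟨_, b, rfl⟩
    refine Subtype.ext ?_
    simp only [LinearMap.lsmul_apply, Submodule.coe_add]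
    rw [hf.map_add_one_sub_smul h0 ht, hf.map_one_sub_smul h0, hf.map_one_sub_smul h0]

theorem smulRangeHom_smul (hf : IsAlexanderHom t f) (h0 : f 0 = 0) (ht : IsUnit t)
    (s : smulRange (1 - t) M) : hf.smulRangeHom h0 ht (t • s) = t • hf.smulRangeHom h0 ht s :=
  Subtype.ext (hf.map_smul h0 s)

theorem smulRangeHom_bijective (hf : IsAlexanderHom t f) (h0 : f 0 = 0) (ht : IsUnit t)
    (hbij : Bijective f) : Bijective (hf.smulRangeHom h0 ht) := by
  refine ⟨fun s s' h => Subtype.ext (hbij.1 (congrArg Subtype.val h)), ?_⟩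
  rintro ⟨_, n, rfl⟩
  obtain ⟨m, rfl⟩ := hbij.2 n
  exact ⟨⟨(1 - t) • m, m, rfl⟩, Subtype.ext (hf.map_one_sub_smul h0 m)⟩

end IsAlexanderHom

end

theorem IsAlexanderHom.nonempty_linearEquiv_smulRange {M N : Type*} [AddCommGroup M]
    [Module Λ M] [AddCommGroup N] [Module Λ N] {f : M → N} (hf : IsAlexanderHom (T 1 : Λ) f)
    (hbij : Bijective f) :
    Nonempty (smulRange (1 - T 1 : Λ) M ≃ₗ[Λ] smulRange (1 - T 1 : Λ) N) := by
  have hg := hf.sub_const (f 0)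
  have hg0 : f 0 - f 0 = 0 := sub_self _
  have hgbij : Bijective fun m => f m - f 0 := (Equiv.subRight (f 0)).bijective.comp hbij
  let g := hg.smulRangeHom hg0 (isUnit_T 1)
  let gₗ : smulRange (1 - T 1 : Λ) M →ₗ[Λ] smulRange (1 - T 1 : Λ) N :=
    { g with map_smul' := map_smul_of_map_T_one_smul g (hg.smulRangeHom_smul hg0 (isUnit_T 1)) }
  exact ⟨.ofBijective gₗ (hg.smulRangeHom_bijective hg0 (isUnit_T 1) hgbij)⟩

section

variable {R : Type*} [CommRing R] {M N : Type*} [AddCommGroup M] [Module R M] [AddCommGroup N]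
  [Module R N]

def Submodule.equivQuotientProd (p : Submodule R M) {σ : M ⧸ p → M}
    (hσ : RightInverse σ p.mkQ) : M ≃ (M ⧸ p) × p where
  toFun m := (p.mkQ m, ⟨m - σ (p.mkQ m), (Submodule.Quotient.eq p).mp (hσ _).symm⟩)
  invFun x := σ x.1 + x.2
  left_inv m := add_sub_cancel _ _
  right_inv := by
    rintro ⟨x, s⟩
    have hx : p.mkQ (σ x + s) = x := by
      rw [map_add, hσ x, Submodule.mkQ_apply, (Submodule.Quotient.mk_eq_zero p).mpr s.2, add_zero]
    ext
    · exact hx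
    · simp [hx]

theorem LinearEquiv.map_smulRange {P Q : Type*} [AddCommGroup P] [Module R P] [AddCommGroup Q]
    [Module R Q] (e : P ≃ₗ[R] Q) (r : R) :
    (smulRange r P).map (e : P →ₗ[R] Q) = smulRange r Q := by
  ext x
  constructor
  · rintro ⟨_, ⟨y, rfl⟩, rfl⟩
    exact ⟨e y, (map_smul e r y).symm⟩
  · rintro ⟨y, rfl⟩
    exact ⟨r • e.symm y, ⟨_, rfl⟩, by simp⟩

def smulRangeQuotientMap (r : R) (M : Type*) [AddCommGroup M] [Module R M] :
    (M ⧸ smulRange r M) →ₗ[R] smulRange r M ⧸ smulRange r (smulRange r M) :=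
  (smulRange r M).mapQ _ (LinearMap.lsmul R M r).rangeRestrict <| by
    rintro _ ⟨m, rfl⟩
    exact ⟨(LinearMap.lsmul R M r).rangeRestrict m, rfl⟩

theorem smulRangeQuotientMap_surjective (r : R) : Surjective (smulRangeQuotientMap r M) := by
  intro y
  obtain ⟨⟨_, m, rfl⟩, rfl⟩ := Submodule.Quotient.mk_surjective _ y
  exact ⟨Submodule.Quotient.mk m, rfl⟩

theorem exists_mk_eq_and_smul_eq {r : R} {y : M ⧸ smulRange r M} {z : smulRange r M}
    (h : smulRangeQuotientMap r M y = Submodule.Quotient.mk z) :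
    ∃ m, Submodule.Quotient.mk m = y ∧ r • m = z := by
  obtain ⟨m, rfl⟩ := Submodule.Quotient.mk_surjective _ y
  obtain ⟨s, hs⟩ := (Submodule.Quotient.eq _).mp h.symm
  refine ⟨m + s, ?_, ?_⟩
  · rw [Submodule.Quotient.mk_add, (Submodule.Quotient.mk_eq_zero _).mpr s.2, add_zero]
  · have hs' := congrArg Subtype.val hs
    simp only [LinearMap.lsmul_apply, Submodule.coe_smul, Submodule.coe_sub] at hs'
    rw [smul_add, hs']
    simp

theorem mk_smul_add_one_sub_smul (t : R) (a b : M) :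
    (Submodule.Quotient.mk (t • a + (1 - t) • b) : M ⧸ smulRange (1 - t) M) =
      Submodule.Quotient.mk a :=
  (Submodule.Quotient.eq _).mpr ⟨b - a, by simp only [LinearMap.lsmul_apply]; module⟩

theorem exists_bijective_isAlexanderHom_of_rightInverse (t : R)
    (e : smulRange (1 - t) M ≃ₗ[R] smulRange (1 - t) N)
    (G : M ⧸ smulRange (1 - t) M ≃ N ⧸ smulRange (1 - t) N)
    {σM : M ⧸ smulRange (1 - t) M → M} (hσM : RightInverse σM (smulRange (1 - t) M).mkQ)
    {σN : N ⧸ smulRange (1 - t) N → N} (hσN : RightInverse σN (smulRange (1 - t) N).mkQ)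
    (hσ : ∀ x, (e ((LinearMap.lsmul R M (1 - t)).rangeRestrict (σM x)) : N) =
      (1 - t) • σN (G x)) :
    ∃ f : M → N, Bijective f ∧ IsAlexanderHom t f := by
  let ρ := (LinearMap.lsmul R M (1 - t)).rangeRestrict
  let dM := (smulRange (1 - t) M).equivQuotientProd hσM
  let f := (dM.trans (G.prodCongr e.toEquiv)).trans
    ((smulRange (1 - t) N).equivQuotientProd hσN).symm
  have hf (m : M) : f m = σN (G (dM m).1) + e (dM m).2 := rfl
  refine ⟨f, f.bijective, fun a b => ?_⟩
  have hd₁ : (dM (t • a + (1 - t) • b)).1 = (dM a).1 := mk_smul_add_one_sub_smul t a b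
  have hd₂ : (dM (t • a + (1 - t) • b)).2 =
      t • (dM a).2 + (1 - t) • (dM b).2 + ρ (σM (dM b).1) - ρ (σM (dM a).1) := by
    ext
    simp only [dM, ρ, Submodule.equivQuotientProd, Equiv.coe_fn_mk, Submodule.mkQ_apply,
      mk_smul_add_one_sub_smul, Submodule.coe_add, Submodule.coe_sub, Submodule.coe_smul,
      LinearMap.codRestrict_apply, LinearMap.lsmul_apply]
    module
  rw [hf, hf a, hf b, hd₁, hd₂]
  simp only [map_sub, map_add, map_smul, Submodule.coe_sub, Submodule.coe_add,
    Submodule.coe_smul, ρ, hσ]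
  module

theorem exists_bijective_isAlexanderHom_of_linearEquiv [Finite M] [Finite N]
    (hcard : Nat.card M = Nat.card N) (t : R)
    (e : smulRange (1 - t) M ≃ₗ[R] smulRange (1 - t) N) :
    ∃ f : M → N, Bijective f ∧ IsAlexanderHom t f := by
  have : Finite (M ⧸ smulRange (1 - t) M) := Quotient.finite _
  have : Finite (N ⧸ smulRange (1 - t) N) := Quotient.finite _
  have hquot : Nat.card (M ⧸ smulRange (1 - t) M) = Nat.card (N ⧸ smulRange (1 - t) N) := by
    have h := (smulRange (1 - t) M).card_eq_card_quotient_mul_card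
    rw [Nat.card_congr e.toEquiv, hcard, (smulRange (1 - t) N).card_eq_card_quotient_mul_card] at h
    exact (Nat.eq_of_mul_eq_mul_left Nat.card_pos h).symm
  let ē := Submodule.Quotient.equiv _ _ e (e.map_smulRange (1 - t))
  obtain ⟨G, hG⟩ := AddMonoidHom.exists_equiv_comp_eq_of_surjective
    (φ := (ē.toLinearMap ∘ₗ smulRangeQuotientMap (1 - t) M).toAddMonoidHom)
    (ψ := (smulRangeQuotientMap (1 - t) N).toAddMonoidHom)
    (ē.surjective.comp (smulRangeQuotientMap_surjective (1 - t)))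
    (smulRangeQuotientMap_surjective (1 - t)) hquot
  have hlift (x : M ⧸ smulRange (1 - t) M) : ∃ n, Submodule.Quotient.mk n = G x ∧
      (1 - t) • n = e ((LinearMap.lsmul R M (1 - t)).rangeRestrict x.out) :=
    exists_mk_eq_and_smul_eq <| by
      rw [← LinearMap.toAddMonoidHom_coe, hG]
      conv_lhs => rw [← Quotient.out_eq' x]
      rfl
  choose σ hσG hσ using hlift
  exact exists_bijective_isAlexanderHom_of_rightInverse t e G (σM := Quotient.out)
    (σN := σ ∘ G.symm) (fun x => Quotient.out_eq' x) (fun y => by simp [hσG])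
    (fun x => by simp [hσ])

end

/-- **Theorem 1 (Nelson).** Two finite Alexander quandles `M` and `N` of the same
cardinality are isomorphic as quandles iff there is an isomorphism of
`Λ = ℤ[t,t⁻¹]`-modules `(1-t)M ≃ (1-t)N`.  The quandle operation on a
`Λ`-module is `a ^ b = t•a + (1-t)•b`, and `(1-t)M` is the range of
multiplication by `1 - t`. -/
theorem finite_alexander_quandles_iso_iff
    (M N : Type) [AddCommGroup M] [Module (LaurentPolynomial ℤ) M]
    [AddCommGroup N] [Module (LaurentPolynomial ℤ) N]
    [Finite M] [Finite N] (hcard : Nat.card M = Nat.card N) :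
    (∃ f : M → N, Function.Bijective f ∧
        ∀ a b : M,
          f ((T 1 : LaurentPolynomial ℤ) • a + ((1 : LaurentPolynomial ℤ) - T 1) • b)
            = (T 1 : LaurentPolynomial ℤ) • f a + ((1 : LaurentPolynomial ℤ) - T 1) • f b) ↔
      Nonempty
        ((LinearMap.range (LinearMap.lsmul (LaurentPolynomial ℤ) M ((1 : LaurentPolynomial ℤ) - T 1)))
          ≃ₗ[LaurentPolynomial ℤ]
         (LinearMap.range (LinearMap.lsmul (LaurentPolynomial ℤ) N ((1 : LaurentPolynomial ℤ) - T 1)))) := by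
  exact ⟨fun ⟨_, hbij, hf⟩ => IsAlexanderHom.nonempty_linearEquiv_smulRange hf hbij,
    fun ⟨e⟩ => exists_bijective_isAlexanderHom_of_linearEquiv hcard _ e⟩
end

section
/- If M and N are finite Alexander quandles and f : M → N is a quandle isomorphism with f(0) = 0, then f satisfies f(t·x) = t·f(x) and f((1−t)·y) = (1−t)·f(y) for all x, y ∈ M, and the restriction of f to the submodule (1−t)M is an isomorphism of Λ-modules from (1−t)M onto (1−t)N. -/
/-!
Setting `a = 0` or `b = 0` in `f (t • a + (1 - t) • b) = t • f a + (1 - t) • f b` shows that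
`f` commutes with `t` and with `1 - t`. Since `t` is invertible every `x` is `t • (t⁻¹ • x)`,
so the same identity reads `f (x + (1 - t) • b) = f x + (1 - t) • f b`: `f` is additive along
`(1 - t)M`. An additive map commuting with `t` is `ℤ[t, t⁻¹]`-linear, and `f` maps `(1 - t)M`
onto `(1 - t)N`.
-/

open LaurentPolynomial

section AlexanderQuandle

variable {R M N : Type*} [CommRing R] [AddCommGroup M] [Module R M] [AddCommGroup N] [Module R N]

def PreservesAlexanderOp (t : R) (f : M → N) : Prop :=
  ∀ a b : M, f (t • a + (1 - t) • b) = t • f a + (1 - t) • f b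

namespace PreservesAlexanderOp

variable {t : R} {f : M → N}

theorem map_smul_self (hf : PreservesAlexanderOp t f) (h0 : f 0 = 0) (x : M) :
    f (t • x) = t • f x := by
  simpa [h0] using hf x 0

theorem map_one_sub_smul (hf : PreservesAlexanderOp t f) (h0 : f 0 = 0) (y : M) :
    f ((1 - t) • y) = (1 - t) • f y := by
  simpa [h0] using hf 0 y

theorem map_add_one_sub_smul (hf : PreservesAlexanderOp t f) (h0 : f 0 = 0) (ht : IsUnit t)
    (x b : M) : f (x + (1 - t) • b) = f x + (1 - t) • f b := by
  obtain ⟨u, rfl⟩ := ht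
  have hx : (u : R) • (u⁻¹ : Rˣ) • x = x := smul_inv_smul u x
  calc f (x + (1 - (u : R)) • b)
      = f ((u : R) • (u⁻¹ : Rˣ) • x + (1 - (u : R)) • b) := by rw [hx]
    _ = (u : R) • f ((u⁻¹ : Rˣ) • x) + (1 - (u : R)) • f b := hf _ _
    _ = f x + (1 - (u : R)) • f b := by rw [← hf.map_smul_self h0, hx]

theorem map_add_of_mem_range (hf : PreservesAlexanderOp t f) (h0 : f 0 = 0) (ht : IsUnit t)
    (x : M) {v : M} (hv : v ∈ LinearMap.range (LinearMap.lsmul R M (1 - t))) :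
    f (x + v) = f x + f v := by
  obtain ⟨b, rfl⟩ := hv
  simp only [LinearMap.lsmul_apply, hf.map_add_one_sub_smul h0 ht, hf.map_one_sub_smul h0]

theorem map_mem_range (hf : PreservesAlexanderOp t f) (h0 : f 0 = 0) {v : M}
    (hv : v ∈ LinearMap.range (LinearMap.lsmul R M (1 - t))) :
    f v ∈ LinearMap.range (LinearMap.lsmul R N (1 - t)) := by
  obtain ⟨b, rfl⟩ := hv
  exact ⟨f b, (hf.map_one_sub_smul h0 b).symm⟩

def restrictRange (hf : PreservesAlexanderOp t f) (h0 : f 0 = 0) (ht : IsUnit t) :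
    LinearMap.range (LinearMap.lsmul R M (1 - t)) →+
      LinearMap.range (LinearMap.lsmul R N (1 - t)) where
  toFun v := ⟨f v, hf.map_mem_range h0 v.2⟩
  map_zero' := Subtype.ext h0
  map_add' u v := Subtype.ext (hf.map_add_of_mem_range h0 ht u v.2)

theorem restrictRange_smul_self (hf : PreservesAlexanderOp t f) (h0 : f 0 = 0) (ht : IsUnit t)
    (v : LinearMap.range (LinearMap.lsmul R M (1 - t))) :
    hf.restrictRange h0 ht (t • v) = t • hf.restrictRange h0 ht v :=
  Subtype.ext (hf.map_smul_self h0 v)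

theorem bijective_restrictRange (hf : PreservesAlexanderOp t f) (h0 : f 0 = 0) (ht : IsUnit t)
    (hbij : Function.Bijective f) : Function.Bijective (hf.restrictRange h0 ht) := by
  refine ⟨fun u v huv => Subtype.ext (hbij.1 (congrArg Subtype.val huv)), ?_⟩
  rintro ⟨_, b, rfl⟩
  obtain ⟨a, rfl⟩ := hbij.2 b
  exact ⟨⟨(1 - t) • a, a, rfl⟩, Subtype.ext (hf.map_one_sub_smul h0 a)⟩

end PreservesAlexanderOp

end AlexanderQuandle

local notation "Λ" => LaurentPolynomial ℤ

theorem LaurentPolynomial.map_smul_of_map_T_smul {P Q : Type*} [AddCommGroup P] [Module Λ P]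
    [AddCommGroup Q] [Module Λ Q] (g : P →+ Q)
    (hg : ∀ x, g ((T 1 : Λ) • x) = (T 1 : Λ) • g x) (c : Λ) (x : P) :
    g (c • x) = c • g x := by
  have hg_inv : ∀ x, g ((T (-1) : Λ) • x) = (T (-1) : Λ) • g x := fun x => by
    calc g ((T (-1) : Λ) • x) = (T (-1) : Λ) • (T 1 : Λ) • g ((T (-1) : Λ) • x) := by
          rw [smul_smul, ← T_add]; simp
      _ = (T (-1) : Λ) • g x := by rw [← hg, smul_smul, ← T_add]; simp
  have hmul : ∀ c d : Λ, (∀ x, g (c • x) = c • g x) → (∀ x, g (d • x) = d • g x) →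
      ∀ x, g ((c * d) • x) = (c * d) • g x := fun c d hc hd x => by
    rw [mul_smul, hc, hd, mul_smul]
  revert x
  induction c using LaurentPolynomial.induction_on with
  | h_C a => intro x; rw [C_eq_algebraMap, algebraMap_smul, algebraMap_smul, map_zsmul]
  | h_add hp hq => intro x; rw [add_smul, map_add, hp, hq, add_smul]
  | h_C_mul_T n a h =>
    rw [T_add, ← mul_assoc]
    exact hmul _ _ h hg
  | h_C_mul_T_Z n a h =>
    rw [sub_eq_add_neg, T_add, ← mul_assoc]
    exact hmul _ _ h hg_inv

theorem quandle_iso_restricts_to_module_iso_general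
    (M N : Type) [AddCommGroup M] [Module (LaurentPolynomial ℤ) M]
    [AddCommGroup N] [Module (LaurentPolynomial ℤ) N]
    (f : M → N) (hbij : Function.Bijective f)
    (hq : ∀ a b : M,
      f ((T 1 : LaurentPolynomial ℤ) • a + ((1 : LaurentPolynomial ℤ) - T 1) • b)
        = (T 1 : LaurentPolynomial ℤ) • f a + ((1 : LaurentPolynomial ℤ) - T 1) • f b)
    (h0 : f 0 = 0) :
    (∀ x : M, f ((T 1 : LaurentPolynomial ℤ) • x) = (T 1 : LaurentPolynomial ℤ) • f x) ∧
    (∀ y : M, f (((1 : LaurentPolynomial ℤ) - T 1) • y)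
        = ((1 : LaurentPolynomial ℤ) - T 1) • f y) ∧
    ∃ h : (LinearMap.range (LinearMap.lsmul (LaurentPolynomial ℤ) M ((1 : LaurentPolynomial ℤ) - T 1)))
            ≃ₗ[LaurentPolynomial ℤ]
          (LinearMap.range (LinearMap.lsmul (LaurentPolynomial ℤ) N ((1 : LaurentPolynomial ℤ) - T 1))),
      ∀ x : LinearMap.range (LinearMap.lsmul (LaurentPolynomial ℤ) M ((1 : LaurentPolynomial ℤ) - T 1)),
        (h x : N) = f (x : M) := by
  have hf : PreservesAlexanderOp (T 1 : Λ) f := hq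
  have ht : IsUnit (T 1 : Λ) := isUnit_T 1
  let g := hf.restrictRange h0 ht
  let gₗ : _ →ₗ[Λ] _ :=
    { g with map_smul' := map_smul_of_map_T_smul g (hf.restrictRange_smul_self h0 ht) }
  exact ⟨hf.map_smul_self h0, hf.map_one_sub_smul h0,
    LinearEquiv.ofBijective gₗ (hf.bijective_restrictRange h0 ht hbij), fun _ => rfl⟩

/-- If `M` and `N` are finite Alexander quandles and `f : M → N` is a quandle
isomorphism with `f 0 = 0`, then `f (t•x) = t•f x` and `f ((1-t)•y) = (1-t)•f y`
for all `x, y`, and the restriction of `f` to the submodule `(1-t)M` is an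
isomorphism of `Λ = ℤ[t,t⁻¹]`-modules onto `(1-t)N`. -/
theorem quandle_iso_restricts_to_module_iso
    (M N : Type) [AddCommGroup M] [Module (LaurentPolynomial ℤ) M]
    [AddCommGroup N] [Module (LaurentPolynomial ℤ) N]
    [Finite M] [Finite N] (f : M → N) (hbij : Function.Bijective f)
    (hq : ∀ a b : M,
      f ((T 1 : LaurentPolynomial ℤ) • a + ((1 : LaurentPolynomial ℤ) - T 1) • b)
        = (T 1 : LaurentPolynomial ℤ) • f a + ((1 : LaurentPolynomial ℤ) - T 1) • f b)
    (h0 : f 0 = 0) :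
    (∀ x : M, f ((T 1 : LaurentPolynomial ℤ) • x) = (T 1 : LaurentPolynomial ℤ) • f x) ∧
    (∀ y : M, f (((1 : LaurentPolynomial ℤ) - T 1) • y)
        = ((1 : LaurentPolynomial ℤ) - T 1) • f y) ∧
    ∃ h : (LinearMap.range (LinearMap.lsmul (LaurentPolynomial ℤ) M ((1 : LaurentPolynomial ℤ) - T 1)))
            ≃ₗ[LaurentPolynomial ℤ]
          (LinearMap.range (LinearMap.lsmul (LaurentPolynomial ℤ) N ((1 : LaurentPolynomial ℤ) - T 1))),
      ∀ x : LinearMap.range (LinearMap.lsmul (LaurentPolynomial ℤ) M ((1 : LaurentPolynomial ℤ) - T 1)),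
        (h x : N) = f (x : M) :=
  quandle_iso_restricts_to_module_iso_general M N f hbij hq h0
end

section
/- Let n ≥ 1 and let a, b be integers coprime to n. The linear Alexander quandle Λ_n/(t−a) is dual to Λ_n/(t−b) (i.e., Λ_n/(t−b) is isomorphic as a quandle to the dual quandle of Λ_n/(t−a)) if and only if N(n,a) = N(n,b) and a·b ≡ 1 (mod N(n,a)), where N(n,c) := n/gcd(n, 1−c). -/
/-!
The dual of `Λₙ/(t-a)` is the Alexander quandle on `ℤ/n` with `t` acting by `u = a⁻¹`, so the
question is when the Alexander quandles `(ℤ/n, u)` and `(ℤ/n, b)` are isomorphic. For a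
homomorphism `f`, the map `y ↦ (1-b)(f y - f 0)` is additive, hence multiplication by
`c = (1-b)(f 1 - f 0)`, and `f ((1-u) y) = f 0 + c y`. Injectivity of `f` then says that `c` and
`1-u` have the same annihilator; since `(1-b) ∣ c`, and by symmetry under `f⁻¹`, the elements `1-u`
and `1-b` have the same annihilator, and evaluating `f` at `1-u` gives `(1-u)(u-b) = 0`.
Conversely, if `(1-b) w = 1-u` for a unit `w` and `(1-u)(u-b) = 0`, then `ρ + i ↦ wρ + i`, for `ρ`
running over fixed representatives modulo `1-u` and `i ∈ (1-u)`, is an isomorphism.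
In `ℤ/n` two elements have the same annihilator iff they have the same additive order iff they are
associated, and the additive order of `1-c` is `n / gcd(n, 1-c) = N(n, c)`.
-/

section AlexanderQuandle

variable {R : Type*} [CommRing R]

def IsAlexanderQuandleHom (u v : R) (f : R → R) : Prop :=
  ∀ x y, f (u * x + (1 - u) * y) = v * f x + (1 - v) * f y

variable {u v : R} {f : R → R}

theorem IsAlexanderQuandleHom.map_add_one_sub_mul (hf : IsAlexanderQuandleHom u v f)
    (hu : IsUnit u) (w y : R) : f (w + (1 - u) * y) = f w + (1 - v) * (f y - f 0) := by
  obtain ⟨w, rfl⟩ : ∃ w', w = u * w' :=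
    ⟨hu.unit⁻¹ * w, by rw [← mul_assoc, hu.mul_val_inv, one_mul]⟩
  have h := hf w 0
  rw [mul_zero, add_zero] at h
  linear_combination hf w y - h

theorem IsAlexanderQuandleHom.map_add_sub_map_zero (hf : IsAlexanderQuandleHom u v f)
    (hu : IsUnit u) (y z : R) :
    (1 - v) * (f (y + z) - f 0) = (1 - v) * (f y - f 0) + (1 - v) * (f z - f 0) := by
  have h := hf.map_add_one_sub_mul hu ((1 - u) * y) z
  rw [← mul_add, ← zero_add ((1 - u) * _), hf.map_add_one_sub_mul hu,
    ← zero_add ((1 - u) * y), hf.map_add_one_sub_mul hu] at h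
  linear_combination h

theorem isAlexanderQuandleHom_inv_iff (a : Rˣ) :
    (∀ x y z : R, (a : R) * z + (1 - (a : R)) * y = x → f z = v * f x + (1 - v) * f y) ↔
      IsAlexanderQuandleHom (↑a⁻¹ : R) v f := by
  refine ⟨fun h x y => h x y _ ?_, fun h x y z hz => ?_⟩
  · linear_combination (x - y) * a.mul_inv
  · rw [← hz, ← h]
    congr 1
    linear_combination (y - z) * a.inv_mul

theorem IsAlexanderQuandleHom.symm (e : R ≃ R) (he : IsAlexanderQuandleHom u v e) :
    IsAlexanderQuandleHom v u e.symm := fun x y =>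
  e.injective <| by rw [he]; simp only [Equiv.apply_symm_apply]

/-- Sends `ρ + i` to `w * ρ + i`, where `ρ` is the chosen representative of a class of `R ⧸ I`
and `i ∈ I`. -/
noncomputable def twistByRepresentative (I : Ideal R) (w x : R) : R :=
  x + (w - 1) * Function.surjInv Ideal.Quotient.mk_surjective (Ideal.Quotient.mk I x)

theorem mk_twistByRepresentative (I : Ideal R) (w x : R) :
    Ideal.Quotient.mk I (twistByRepresentative I w x) = Ideal.Quotient.mk I (w * x) := by
  simp only [twistByRepresentative, map_add, map_mul, map_sub, map_one, Function.surjInv_eq]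
  ring

theorem twistByRepresentative_bijective (I : Ideal R) (w : Rˣ) :
    (twistByRepresentative I w).Bijective := by
  have hw : Ideal.Quotient.mk I w * Ideal.Quotient.mk I ↑w⁻¹ = 1 := by
    rw [← map_mul, Units.mul_inv, map_one]
  refine ⟨fun x y hxy => ?_, fun z => ⟨z - (w - 1) * Function.surjInv
    Ideal.Quotient.mk_surjective (Ideal.Quotient.mk I (↑w⁻¹ * z)), ?_⟩⟩
  · have hπ : Ideal.Quotient.mk I x = Ideal.Quotient.mk I y := by
      have h := congrArg (Ideal.Quotient.mk I) hxy
      rw [mk_twistByRepresentative, mk_twistByRepresentative, map_mul, map_mul] at h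
      linear_combination Ideal.Quotient.mk I ↑w⁻¹ * h
        + (Ideal.Quotient.mk I y - Ideal.Quotient.mk I x) * hw
    simpa only [twistByRepresentative, hπ, add_left_inj] using hxy
  · have hπ : Ideal.Quotient.mk I (z - (w - 1) * Function.surjInv Ideal.Quotient.mk_surjective
        (Ideal.Quotient.mk I (↑w⁻¹ * z))) = Ideal.Quotient.mk I (↑w⁻¹ * z) := by
      rw [map_sub, map_mul, Function.surjInv_eq Ideal.Quotient.mk_surjective, map_sub, map_one,
        map_mul]
      linear_combination -Ideal.Quotient.mk I z * hw
    simp only [twistByRepresentative, hπ, sub_add_cancel]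

theorem isAlexanderQuandleHom_twistByRepresentative {w : R} (hw : (1 - v) * w = 1 - u)
    (h : (1 - u) * (u - v) = 0) :
    IsAlexanderQuandleHom u v (twistByRepresentative (Ideal.span {1 - u}) w) := by
  set π := Ideal.Quotient.mk (Ideal.span {1 - u})
  set r := Function.surjInv (Ideal.Quotient.mk_surjective (I := Ideal.span {1 - u}))
  have hπu : π u = 1 := by
    rw [← map_one π, eq_comm, Ideal.Quotient.eq]
    exact Ideal.mem_span_singleton_self _
  have hkill (x : R) : (u - v) * (x - r (π x)) = 0 := by
    obtain ⟨c, hc⟩ :=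
      Ideal.mem_span_singleton'.mp (Ideal.Quotient.eq.mp (Function.surjInv_eq _ (π x)).symm)
    rw [← hc]
    linear_combination c * h
  intro x y
  have hπ : π (u * x + (1 - u) * y) = π x := by
    rw [map_add, map_mul, map_mul, map_sub, map_one, hπu]
    ring
  simp only [twistByRepresentative, π, hπ]
  linear_combination hkill x - hkill y + (r (π x) - r (π y)) * hw

theorem exists_bijective_isAlexanderQuandleHom (huv : Associated (1 - v) (1 - u))
    (h : (1 - u) * (u - v) = 0) : ∃ f : R → R, f.Bijective ∧ IsAlexanderQuandleHom u v f :=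
  let ⟨w, hw⟩ := huv
  ⟨_, twistByRepresentative_bijective _ w, isAlexanderQuandleHom_twistByRepresentative hw h⟩

theorem associated_one_sub_inv (a : Rˣ) : Associated (1 - (↑a⁻¹ : R)) (1 - a) :=
  ⟨-a, by rw [Units.val_neg]; linear_combination a.inv_mul⟩

theorem one_sub_inv_mul_inv_sub_eq_zero_iff (a : Rˣ) (v : R) :
    (1 - (↑a⁻¹ : R)) * (↑a⁻¹ - v) = 0 ↔ (1 - a) * (1 - a * v) = 0 := by
  rw [← Units.mul_left_eq_zero (-(a * a)), Units.val_neg, Units.val_mul]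
  constructor <;> intro h
  · linear_combination h - (1 - a + ↑a⁻¹ * a - a * v) * a.inv_mul
  · linear_combination h + (1 - a + ↑a⁻¹ * a - a * v) * a.inv_mul

end AlexanderQuandle

theorem ZMod.addMonoidHom_apply_eq_mul {n : ℕ} (φ : ZMod n →+ ZMod n) (x : ZMod n) :
    φ x = x * φ 1 := by
  simpa only [smul_eq_mul, mul_one] using ZMod.map_smul φ x 1

namespace IsAlexanderQuandleHom

variable {n : ℕ} {u v : ZMod n} {f : ZMod n → ZMod n}

theorem map_one_sub_mul (hf : IsAlexanderQuandleHom u v f) (hu : IsUnit u) (y : ZMod n) :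
    f ((1 - u) * y) = f 0 + (1 - v) * (f 1 - f 0) * y := by
  let ψ : ZMod n →+ ZMod n :=
    AddMonoidHom.mk' (fun y => (1 - v) * (f y - f 0)) (hf.map_add_sub_map_zero hu)
  have hψ : (1 - v) * (f y - f 0) = y * ((1 - v) * (f 1 - f 0)) :=
    ZMod.addMonoidHom_apply_eq_mul ψ y
  rw [← zero_add ((1 - u) * y), hf.map_add_one_sub_mul hu, hψ]
  ring

theorem one_sub_mul_eq_zero_iff (hf : IsAlexanderQuandleHom u v f) (hinj : f.Injective)
    (hu : IsUnit u) (y : ZMod n) :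
    (1 - u) * y = 0 ↔ (1 - v) * (f 1 - f 0) * y = 0 := by
  rw [← hinj.eq_iff, hf.map_one_sub_mul hu, add_eq_left]

theorem one_sub_mul_eq_zero (hf : IsAlexanderQuandleHom u v f) (hinj : f.Injective)
    (hu : IsUnit u) {y : ZMod n} (hy : (1 - v) * y = 0) : (1 - u) * y = 0 := by
  rw [hf.one_sub_mul_eq_zero_iff hinj hu, mul_right_comm, hy, zero_mul]

theorem one_sub_mul_sub_eq_zero (hf : IsAlexanderQuandleHom u v f) (hinj : f.Injective)
    (hu : IsUnit u) : (1 - u) * (u - v) = 0 := by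
  have h : f ((1 - u) * u) = v * f ((1 - u) * 1) + (1 - v) * f ((1 - u) * 0) := by
    simpa only [mul_one, mul_zero, add_zero, mul_comm u] using hf (1 - u) 0
  rw [hf.map_one_sub_mul hu, hf.map_one_sub_mul hu, hf.map_one_sub_mul hu] at h
  rw [hf.one_sub_mul_eq_zero_iff hinj hu]
  linear_combination h

end IsAlexanderQuandleHom

section AddOrder

variable {R : Type*} [CommRing R] {x y : R}

theorem addOrderOf_eq_of_forall_mul_eq_zero_iff (h : ∀ z, x * z = 0 ↔ y * z = 0) :
    addOrderOf x = addOrderOf y :=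
  addOrderOf_eq_addOrderOf_iff.mpr fun k => by simpa only [nsmul_eq_mul'] using h k

theorem Associated.addOrderOf_eq (h : Associated x y) : addOrderOf x = addOrderOf y := by
  obtain ⟨w, rfl⟩ := h
  exact addOrderOf_eq_of_forall_mul_eq_zero_iff fun z => by
    rw [mul_right_comm, Units.mul_left_eq_zero]

theorem mul_intCast_eq_zero_iff (x : R) (m : ℤ) : x * m = 0 ↔ (addOrderOf x : ℤ) ∣ m := by
  rw [addOrderOf_dvd_iff_zsmul_eq_zero, zsmul_eq_mul']

end AddOrder

namespace ZMod

variable {n : ℕ}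

theorem addOrderOf_intCast [NeZero n] (x : ℤ) :
    addOrderOf (x : ZMod n) = n / Int.gcd n x := by
  rcases Int.natAbs_eq x with hx | hx <;> rw [hx]
  · rw [Int.cast_natCast, addOrderOf_coe _ (NeZero.ne n)]; rfl
  · rw [Int.cast_neg, Int.cast_natCast, addOrderOf_neg, addOrderOf_coe _ (NeZero.ne n),
      Int.gcd_neg]
    rfl

theorem associated_natCast_div_addOrderOf [NeZero n] (x : ZMod n) :
    Associated x ((n / addOrderOf x : ℕ) : ZMod n) := by
  obtain ⟨d, hd, w, hw, rfl⟩ := eq_unit_mul_divisor x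
  have hwd := associated_unit_mul_left (d : ZMod n) w hw
  rwa [hwd.addOrderOf_eq, addOrderOf_coe _ (NeZero.ne n), Nat.gcd_eq_right hd,
    Nat.div_div_self hd (NeZero.ne n)]

theorem associated_iff_addOrderOf_eq [NeZero n] {x y : ZMod n} :
    Associated x y ↔ addOrderOf x = addOrderOf y := by
  refine ⟨Associated.addOrderOf_eq, fun h => ?_⟩
  have hy := associated_natCast_div_addOrderOf y
  rw [← h] at hy
  exact (associated_natCast_div_addOrderOf x).trans hy.symm

theorem exists_bijective_isAlexanderQuandleHom_iff [NeZero n] {u v : ZMod n} (hu : IsUnit u)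
    (hv : IsUnit v) : (∃ f : ZMod n → ZMod n, f.Bijective ∧ IsAlexanderQuandleHom u v f) ↔
      Associated (1 - u) (1 - v) ∧ (1 - u) * (u - v) = 0 := by
  refine ⟨fun ⟨f, hbij, hf⟩ => ?_,
    fun ⟨huv, h⟩ => exists_bijective_isAlexanderQuandleHom huv.symm h⟩
  let e := Equiv.ofBijective f hbij
  have he : IsAlexanderQuandleHom v u e.symm := IsAlexanderQuandleHom.symm e hf
  refine ⟨associated_iff_addOrderOf_eq.mpr (addOrderOf_eq_of_forall_mul_eq_zero_iff fun z =>
    ⟨he.one_sub_mul_eq_zero e.symm.injective hv, hf.one_sub_mul_eq_zero hbij.1 hu⟩),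
    hf.one_sub_mul_sub_eq_zero hbij.1 hu⟩

end ZMod

/-- Let `n ≥ 1` and let `a, b` be integers coprime to `n`.  The linear Alexander
quandle `Λₙ/(t-a)` is dual to `Λₙ/(t-b)`, i.e. there is a bijection `f` of
`ZMod n` carrying the dual operation of `Λₙ/(t-a)` (where `x ^ ȳ` is the unique
`z` with `a*z + (1-a)*y = x`) to the operation of `Λₙ/(t-b)`, iff
`N(n,a) = N(n,b)` and `a·b ≡ 1 (mod N(n,a))`, where `N(n,c) = n / gcd(n, 1-c)`. -/
theorem linear_alexander_quandles_dual_iff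
    (n : ℕ) (hn : 1 ≤ n) (a b : ℤ)
    (ha : Int.gcd a n = 1) (hb : Int.gcd b n = 1) :
    (∃ f : ZMod n → ZMod n, Function.Bijective f ∧
        ∀ x y z : ZMod n,
          (a : ZMod n) * z + ((1 - a : ℤ) : ZMod n) * y = x →
            f z = (b : ZMod n) * f x + ((1 - b : ℤ) : ZMod n) * f y) ↔
      (n / Int.gcd (n : ℤ) (1 - a) = n / Int.gcd (n : ℤ) (1 - b) ∧
        a * b ≡ 1 [ZMOD ((n / Int.gcd (n : ℤ) (1 - a) : ℕ) : ℤ)]) := by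
  have : NeZero n := ⟨by omega⟩
  have hunit {c : ℤ} (hc : Int.gcd c n = 1) : IsUnit (c : ZMod n) :=
    (ZMod.coe_int_isUnit_iff_isCoprime c n).mpr
      (Int.isCoprime_iff_gcd_eq_one.mpr (by rwa [Int.gcd_comm]))
  obtain ⟨A, hA⟩ := hunit ha
  have hN (c : ℤ) : n / Int.gcd n (1 - c) = addOrderOf (1 - (c : ZMod n)) := by
    rw [← ZMod.addOrderOf_intCast (1 - c), Int.cast_sub, Int.cast_one]
  rw [hN a, hN b, Int.modEq_iff_dvd, ← mul_intCast_eq_zero_iff]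
  push_cast
  rw [← hA]
  simp_rw [isAlexanderQuandleHom_inv_iff]
  rw [ZMod.exists_bijective_isAlexanderQuandleHom_iff A⁻¹.isUnit (hunit hb),
    ZMod.associated_iff_addOrderOf_eq, (associated_one_sub_inv A).addOrderOf_eq,
    one_sub_inv_mul_inv_sub_eq_zero_iff]
end

section
/- If M is a finite Alexander quandle whose cardinality n satisfies n ≡ 2 (mod 4), then M is not connected. -/
/-!
If `4 ∤ |M|`, the finite abelian group `M` has exactly one element `u` of order `2`
(Cauchy gives one; a second would survive in `M ⧸ ⟨u⟩` and force `4 ∣ |M|`). Every injective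
endomorphism of `M` therefore fixes `u`. If `1 - t` were surjective it would be injective, and `t`
is a unit, so `u = t • u + (1 - t) • u = u + u = 0`, which is absurd.
-/

open LaurentPolynomial

theorem AddSubgroup.eq_zero_or_eq_of_mem_zmultiples_of_addOrderOf_eq_two {G : Type*} [AddGroup G]
    {a b : G} (ha : addOrderOf a = 2) (hb : b ∈ AddSubgroup.zmultiples a) : b = 0 ∨ b = a := by
  obtain ⟨k, rfl⟩ := AddSubgroup.mem_zmultiples_iff.mp hb
  rw [← mod_addOrderOf_zsmul, ha]
  rcases Int.emod_two_eq_zero_or_one k with hk | hk <;> simp [hk]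

theorem eq_of_addOrderOf_eq_two_of_not_four_dvd_card {G : Type*} [AddCommGroup G]
    (hG : ¬ 4 ∣ Nat.card G) {a b : G} (ha : addOrderOf a = 2) (hb : addOrderOf b = 2) :
    a = b := by
  by_contra hab
  set H := AddSubgroup.zmultiples a
  have hbH : b ∉ H := fun hbH => by
    rcases AddSubgroup.eq_zero_or_eq_of_mem_zmultiples_of_addOrderOf_eq_two ha hbH with h | h
    · simp [h] at hb
    · exact hab h.symm
  have hb' : addOrderOf (b : G ⧸ H) = 2 := by
    refine addOrderOf_eq_prime ?_ ((QuotientAddGroup.eq_zero_iff b).not.mpr hbH)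
    rw [← QuotientAddGroup.mk_nsmul, ← hb, addOrderOf_nsmul_eq_zero, QuotientAddGroup.mk_zero]
  apply hG
  rw [H.card_eq_card_quotient_mul_card_addSubgroup, Nat.card_zmultiples, ha]
  exact mul_dvd_mul_right (hb' ▸ addOrderOf_dvd_natCard _) 2

theorem AddMonoidHom.apply_eq_self_of_addOrderOf_eq_two {G : Type*} [AddCommGroup G]
    (hG : ¬ 4 ∣ Nat.card G) (f : G →+ G) (hf : Function.Injective f) {u : G}
    (hu : addOrderOf u = 2) : f u = u :=
  eq_of_addOrderOf_eq_two_of_not_four_dvd_card hG (hu ▸ addOrderOf_injective f hf u) hu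

/-- If `M` is a finite Alexander quandle (a module over `Λ = ℤ[t,t⁻¹]`, with
quandle operation `x ^ y = t•x + (1-t)•y`) whose cardinality is `≡ 2 (mod 4)`,
then `M` is not connected, i.e. `(1-t)M ≠ M`. -/
theorem alexander_quandle_card_two_mod_four_not_connected
    (M : Type) [AddCommGroup M] [Module (LaurentPolynomial ℤ) M] [Finite M]
    (hcard : Nat.card M % 4 = 2) :
    ¬ (∀ y : M, ∃ x : M, ((1 : LaurentPolynomial ℤ) - T 1) • x = y) := by
  intro hsurj
  have h4 : ¬ 4 ∣ Nat.card M := by omega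
  obtain ⟨u, hu⟩ := exists_prime_addOrderOf_dvd_card' (G := M) 2 (by omega)
  have hfix : ∀ r : LaurentPolynomial ℤ, Function.Injective (r • · : M → M) → r • u = u :=
    fun r hr => (DistribSMul.toAddMonoidHom M r).apply_eq_self_of_addOrderOf_eq_two h4 hr hu
  have hc := hfix _ (Finite.injective_iff_surjective.mpr hsurj)
  have hT := hfix (T 1) fun x y => (isUnit_T 1).smul_left_cancel.mp
  have hu0 : u ≠ 0 := by
    rintro rfl
    simp at hu
  apply hu0
  calc u = (T 1 + (1 - T 1) : LaurentPolynomial ℤ) • u := by rw [add_sub_cancel, one_smul]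
    _ = u + u := by rw [add_smul, hT, hc]
    _ = 0 := by rw [← two_nsmul, ← hu, addOrderOf_nsmul_eq_zero]
end

section
/- The linear Alexander quandles Λ₉/(t−4) and Λ₉/(t−7) are isomorphic as quandles, but they are not isomorphic as Λ-modules. -/
/-!
In `ZMod 9` the two operations are `x ▷ y = x + 3(x - y)` and `x ▷' y = x - 3(x - y)`.
Since `(x + 3z)³ = x³` and `3x³ = 3x` there, `f x = x + x³` satisfies `f (x + 3z) = f x + 3z` and
`3(f x - f y) = 6(x - y)`, whence `f (x ▷ y) = f x + 3(x - y) = f x - 3(f x - f y) = f x ▷' f y`.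
On the other hand every additive map `g` of `ZMod n` is `ZMod n`-linear, so `g (a x) = b g(x)`
with `g` onto forces `a = b`.
-/

theorem ZMod.eq_of_surjective_of_map_mul {n : ℕ} {a b : ZMod n} (g : ZMod n →+ ZMod n)
    (hg : Function.Surjective g) (h : ∀ x, g (a * x) = b * g x) : a = b := by
  obtain ⟨x, hx⟩ := hg 1
  calc a = a * g x := by rw [hx, mul_one]
    _ = g (a * x) := (ZMod.map_smul g a x).symm
    _ = b * g x := h x
    _ = b := by rw [hx, mul_one]

namespace ZMod9

theorem three_mul_pow_three (x : ZMod 9) : 3 * x ^ 3 = 3 * x := by decide +revert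

theorem pow_three_add_three_mul (x z : ZMod 9) : (x + 3 * z) ^ 3 = x ^ 3 := by
  linear_combination (x ^ 2 * z + 3 * x * z ^ 2 + 3 * z ^ 3) * (ZMod.natCast_self 9)

theorem add_pow_three_bijective : Function.Bijective fun x : ZMod 9 => x + x ^ 3 := by
  decide

theorem add_pow_three_map_alexander (x y : ZMod 9) :
    (4 * x + (1 - 4) * y) + (4 * x + (1 - 4) * y) ^ 3 =
      7 * (x + x ^ 3) + (1 - 7) * (y + y ^ 3) := by
  have hcube : (4 * x + (1 - 4) * y) ^ 3 = x ^ 3 := by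
    rw [← pow_three_add_three_mul x (x - y)]
    ring
  linear_combination hcube - 2 * three_mul_pow_three x + 2 * three_mul_pow_three y
    - (x - y) * ZMod.natCast_self 9

end ZMod9

/-- The linear Alexander quandles `Λ₉/(t-4)` and `Λ₉/(t-7)` (namely `ZMod 9`
with quandle operation `x ^ y = a*x + (1-a)*y` for `a = 4`, resp. `a = 7`) are
isomorphic as quandles, but they are not isomorphic as `Λ`-modules (there is
no additive bijection `g` of `ZMod 9` with `g (4*x) = 7 * g x`). -/
theorem lambda9_t4_t7_quandle_iso_not_module_iso :
    (∃ f : ZMod 9 → ZMod 9, Function.Bijective f ∧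
        ∀ x y : ZMod 9, f (4 * x + (1 - 4) * y) = 7 * f x + (1 - 7) * f y) ∧
    ¬ (∃ g : ZMod 9 → ZMod 9, Function.Bijective g ∧
        (∀ x y : ZMod 9, g (x + y) = g x + g y) ∧
        ∀ x : ZMod 9, g (4 * x) = 7 * g x) := by
  refine ⟨⟨_, ZMod9.add_pow_three_bijective, ZMod9.add_pow_three_map_alexander⟩, ?_⟩
  rintro ⟨g, hg, hadd, hmul⟩
  have h47 : (4 : ZMod 9) = 7 :=
    ZMod.eq_of_surjective_of_map_mul (AddMonoidHom.mk' g hadd) hg.surjective hmul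
  exact absurd h47 (by decide)
end

section
/- There are exactly three isomorphism classes of Alexander quandle structures on the abelian group ℤ/4ℤ ⊕ ℤ/2ℤ: the trivial quandle (t acting as the identity), one isomorphic to the direct sum Λ₂/(t+1) ⊕ Λ₂/(t²+1), given by the automorphism sending (1,0) ↦ (1,1) and (0,1) ↦ (0,1), and one isomorphic to Λ₂/(t³+t²+t+1), given by the automorphism sending (1,0) ↦ (1,1) and (0,1) ↦ (2,1). -/
open LaurentPolynomial

/-- Quandle isomorphism between the Alexander quandles `(A, φ)` and `(B, ψ)`,
where the quandle operation of `(A, φ)` is `x ^ y = φ x + y - φ y`. -/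
def QuandleIsoAut {A B : Type} [AddCommGroup A] [AddCommGroup B]
    (φ : A ≃+ A) (ψ : B ≃+ B) : Prop :=
  ∃ f : A → B, Function.Bijective f ∧
    ∀ x y : A, f (φ x + y - φ y) = ψ (f x) + f y - ψ (f y)

/-- Quandle isomorphism from the Alexander quandle `(A, φ)` to an Alexander
quandle given by a module `M` over `Λ₂ = 𝔽₂[t,t⁻¹]`, whose quandle operation
is `a ^ b = t•a + (1-t)•b`. -/
def QuandleIsoMod {A : Type} [AddCommGroup A] (φ : A ≃+ A)
    (M : Type) [AddCommGroup M] [Module (LaurentPolynomial (ZMod 2)) M] : Prop :=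
  ∃ f : A → M, Function.Bijective f ∧
    ∀ x y : A, f (φ x + y - φ y) =
      (T 1 : LaurentPolynomial (ZMod 2)) • f x +
        ((1 : LaurentPolynomial (ZMod 2)) - T 1) • f y

/-- `Λ₂/(t+1)` as a `Λ₂`-module. -/
abbrev LQ1 : Type := LaurentPolynomial (ZMod 2) ⧸
  Ideal.span {(T 1 + 1 : LaurentPolynomial (ZMod 2))}

/-- `Λ₂/(t²+1)` as a `Λ₂`-module. -/
abbrev LQ2 : Type := LaurentPolynomial (ZMod 2) ⧸
  Ideal.span {(T 2 + 1 : LaurentPolynomial (ZMod 2))}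

/-- `Λ₂/(t³+t²+t+1)` as a `Λ₂`-module. -/
abbrev LQ3 : Type := LaurentPolynomial (ZMod 2) ⧸
  Ideal.span {(T 3 + T 2 + T 1 + 1 : LaurentPolynomial (ZMod 2))}

/-!
An automorphism of `ℤ/4 × ℤ/2` is determined by the images of `(1, 0)` and `(0, 1)`, so there
are only eight, and each is matched with the identity, `φ₂` or `φ₃` by an explicit bijection.
The three quandles are told apart by the number of pairs with `x ^ y = x` (64, 32 and 16), which
a quandle isomorphism preserves.

If the constant term of `p` is a unit, so is `X` in `R[X]/(p)`; hence `R[t,t⁻¹]/(p) ≅ R[X]/(p)`,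
and in the power basis `1, t, …, tⁿ⁻¹` multiplication by `t` is the companion matrix of `p`. Thus
`Λ₂/(t+1) ⊕ Λ₂/(t²+1)` and `Λ₂/(t³+t²+t+1)` are Alexander quandles on `𝔽₂³` with `t` linear.
All the bijections used, here and in the classification, are `𝔽₂`-linear in the binary digits
`(x₁ mod 2, ⌊x₁/2⌋, x₂)` of `x`, although `ℤ/4 × ℤ/2` and `𝔽₂³` are not isomorphic groups.
-/

open Polynomial

namespace AdjoinRoot

variable {R : Type*} [CommRing R] {p : R[X]}

theorem isUnit_root_of_isUnit_coeff_zero (h : IsUnit (p.coeff 0)) : IsUnit (root p) := by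
  obtain ⟨q, hq⟩ := X_dvd_sub_C (p := p)
  have hroot : root p * mk p q = -of p (p.coeff 0) := by
    simpa [mk_self, eq_comm] using congrArg (mk p) hq
  exact isUnit_of_dvd_unit ⟨-mk p q, by rw [mul_neg, hroot, neg_neg]⟩ (h.map (of p))

theorem bijective_linearCombination_root_pow (hp : p.Monic) {n : ℕ} (hn : p.natDegree = n) :
    Function.Bijective (Fintype.linearCombination R fun i : Fin n => root p ^ (i : ℕ)) := by
  obtain ⟨pb, rfl, hgen⟩ : ∃ pb : PowerBasis R (AdjoinRoot p), pb.dim = n ∧ pb.gen = root p :=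
    ⟨powerBasis' hp, hn, powerBasis'_gen hp⟩
  have h : ⇑(Fintype.linearCombination R fun i : Fin pb.dim => root p ^ (i : ℕ)) =
      pb.basis.equivFun.symm := by
    funext v
    rw [Module.Basis.equivFun_symm_apply, Fintype.linearCombination_apply]
    simp [PowerBasis.basis_eq_pow, hgen]
  rw [h]
  exact pb.basis.equivFun.symm.bijective

end AdjoinRoot

namespace LaurentPolynomial

variable {R : Type*} [CommRing R] {p : R[X]} {q : R[T;T⁻¹]}

theorem eval₂_adjoinRoot_toLaurent (hu : IsUnit (AdjoinRoot.root p)) (g : R[X]) :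
    eval₂ (AdjoinRoot.of p) hu.unit (toLaurent g) = AdjoinRoot.mk p g := by
  rw [eval₂_toLaurent, IsUnit.unit_spec, ← AdjoinRoot.aeval_eq, aeval_def]; rfl

theorem ker_eval₂_adjoinRoot (hu : IsUnit (AdjoinRoot.root p)) (hq : toLaurent p = q) :
    RingHom.ker (eval₂ (AdjoinRoot.of p) hu.unit) = Ideal.span {q} := by
  subst hq
  apply le_antisymm
  · intro g hg
    obtain ⟨n, g', hg'⟩ := exists_T_pow g
    have : p ∣ g' := by
      rw [← AdjoinRoot.mk_eq_zero, ← eval₂_adjoinRoot_toLaurent hu, hg', map_mul,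
        RingHom.mem_ker.mp hg, zero_mul]
    obtain ⟨r, rfl⟩ := this
    rw [Ideal.mem_span_singleton]
    exact ⟨toLaurent r * T (-n), by
      rw [← mul_assoc, ← map_mul, hg', mul_assoc, ← T_add, add_neg_cancel, T_zero, mul_one]⟩
  · rw [Ideal.span_le, Set.singleton_subset_iff, SetLike.mem_coe, RingHom.mem_ker,
      eval₂_adjoinRoot_toLaurent, AdjoinRoot.mk_self]

theorem eval₂_adjoinRoot_surjective (hu : IsUnit (AdjoinRoot.root p)) :
    Function.Surjective (eval₂ (AdjoinRoot.of p) hu.unit) := by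
  intro a
  obtain ⟨g, rfl⟩ := AdjoinRoot.mk_surjective a
  exact ⟨toLaurent g, eval₂_adjoinRoot_toLaurent hu g⟩

noncomputable def quotientEquivAdjoinRoot (hu : IsUnit (AdjoinRoot.root p))
    (hq : toLaurent p = q) : R[T;T⁻¹] ⧸ Ideal.span {q} ≃+* AdjoinRoot p :=
  (Ideal.quotEquivOfEq (ker_eval₂_adjoinRoot hu hq).symm).trans
    (RingHom.quotientKerEquivOfSurjective (eval₂_adjoinRoot_surjective hu))

theorem quotientEquivAdjoinRoot_T_smul (hu : IsUnit (AdjoinRoot.root p))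
    (hq : toLaurent p = q) (m : R[T;T⁻¹] ⧸ Ideal.span {q}) :
    quotientEquivAdjoinRoot hu hq ((T 1 : R[T;T⁻¹]) • m) =
      AdjoinRoot.root p * quotientEquivAdjoinRoot hu hq m := by
  obtain ⟨g, rfl⟩ := Ideal.Quotient.mk_surjective m
  show quotientEquivAdjoinRoot hu hq (Ideal.Quotient.mk _ (T 1 * g)) = _
  simp [quotientEquivAdjoinRoot, Ideal.quotEquivOfEq_mk, mul_comm]

theorem exists_addEquiv_quotient_T_smul (hp : p.Monic) (hp0 : IsUnit (p.coeff 0))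
    (hq : toLaurent p = q) {n : ℕ} (hn : p.natDegree = n) (σ : (Fin n → R) → (Fin n → R))
    (hσ : ∀ v, AdjoinRoot.root p * ∑ i : Fin n, v i • AdjoinRoot.root p ^ (i : ℕ) =
      ∑ i, σ v i • AdjoinRoot.root p ^ (i : ℕ)) :
    ∃ e : (Fin n → R) ≃+ R[T;T⁻¹] ⧸ Ideal.span {q}, ∀ v, e (σ v) = (T 1 : R[T;T⁻¹]) • e v := by
  set E := quotientEquivAdjoinRoot (AdjoinRoot.isUnit_root_of_isUnit_coeff_zero hp0) hq
  let c : (Fin n → R) ≃+ AdjoinRoot p := AddEquiv.ofBijective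
    (Fintype.linearCombination R fun i : Fin n => AdjoinRoot.root p ^ (i : ℕ)).toAddMonoidHom
    (AdjoinRoot.bijective_linearCombination_root_pow hp hn)
  refine ⟨c.trans E.symm.toAddEquiv, fun v => E.injective ?_⟩
  change E (E.symm (c (σ v))) = E ((T 1 : R[T;T⁻¹]) • E.symm (c v))
  rw [quotientEquivAdjoinRoot_T_smul, RingEquiv.apply_symm_apply, RingEquiv.apply_symm_apply]
  exact (hσ v).symm

end LaurentPolynomial

section LaurentQuotients

open AdjoinRoot

theorem exists_addEquiv_LQ1 :
    ∃ e : (Fin 1 → ZMod 2) ≃+ LQ1, ∀ v, e ![-v 0] = (T 1 : (ZMod 2)[T;T⁻¹]) • e v := by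
  refine exists_addEquiv_quotient_T_smul (p := X + 1) (monic_X_add_C 1) (by simp) (by simp)
    (natDegree_X_add_C 1) _ fun v => ?_
  have hr := eval₂_root (X + 1 : (ZMod 2)[X])
  simp only [eval₂_add, eval₂_X, eval₂_one] at hr
  simp only [Fin.sum_univ_one, Fin.val_zero, pow_zero, Matrix.cons_val, Algebra.smul_def, map_neg]
  linear_combination algebraMap (ZMod 2) _ (v 0) * hr

theorem exists_addEquiv_LQ2 :
    ∃ e : (Fin 2 → ZMod 2) ≃+ LQ2, ∀ v, e ![-v 1, v 0] = (T 1 : (ZMod 2)[T;T⁻¹]) • e v := by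
  refine exists_addEquiv_quotient_T_smul (p := X ^ 2 + 1) (by monicity!) (by simp)
    (by simp [toLaurent_X_pow]) (by compute_degree!) _ fun v => ?_
  have hr := eval₂_root (X ^ 2 + 1 : (ZMod 2)[X])
  simp only [eval₂_add, eval₂_X_pow, eval₂_one] at hr
  simp only [Fin.sum_univ_two, Fin.val_zero, Fin.val_one, pow_zero, pow_one, Matrix.cons_val,
    Algebra.smul_def, map_neg]
  linear_combination algebraMap (ZMod 2) _ (v 1) * hr

theorem exists_addEquiv_LQ3 :
    ∃ e : (Fin 3 → ZMod 2) ≃+ LQ3,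
      ∀ v, e ![-v 2, v 0 - v 2, v 1 - v 2] = (T 1 : (ZMod 2)[T;T⁻¹]) • e v := by
  refine exists_addEquiv_quotient_T_smul (p := X ^ 3 + X ^ 2 + X + 1) (by monicity!) (by simp)
    (by simp [toLaurent_X_pow]) (by compute_degree!) _ fun v => ?_
  have hr := eval₂_root (X ^ 3 + X ^ 2 + X + 1 : (ZMod 2)[X])
  simp only [eval₂_add, eval₂_X_pow, eval₂_X, eval₂_one] at hr
  simp only [Fin.sum_univ_three, Fin.val_zero, Fin.val_one, Fin.val_two, pow_zero, pow_one,
    Matrix.cons_val, Algebra.smul_def, map_neg, map_sub]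
  linear_combination algebraMap (ZMod 2) _ (v 2) * hr

end LaurentQuotients

section AlexanderQuandle

variable {A B : Type} [AddCommGroup A] [AddCommGroup B]

def IsAlexanderQuandleIso (g : A → A) (h : B → B) (f : A → B) : Prop :=
  Function.Bijective f ∧ ∀ x y, f (g x + y - g y) = h (f x) + f y - h (f y)

instance [Fintype A] [DecidableEq A] [Fintype B] [DecidableEq B] (g : A → A) (h : B → B)
    (f : A → B) : Decidable (IsAlexanderQuandleIso g h f) :=
  inferInstanceAs (Decidable (_ ∧ _))

theorem quandleIsoAut_iff (φ : A ≃+ A) (ψ : B ≃+ B) :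
    QuandleIsoAut φ ψ ↔ ∃ f, IsAlexanderQuandleIso φ ψ f :=
  Iff.rfl

def fixedPairs [Fintype A] [DecidableEq A] (g : A → A) : Finset (A × A) :=
  {p | g p.1 + p.2 - g p.2 = p.1}

theorem IsAlexanderQuandleIso.card_fixedPairs_le [Fintype A] [DecidableEq A] [Fintype B]
    [DecidableEq B] {g : A → A} {h : B → B} {f : A → B} (hf : IsAlexanderQuandleIso g h f) :
    (fixedPairs g).card ≤ (fixedPairs h).card := by
  refine Finset.card_le_card_of_injOn (Prod.map f f) ?_ ?_
  · rintro ⟨x, y⟩ hxy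
    simp only [fixedPairs, Finset.coe_filter, Finset.mem_univ, true_and, Set.mem_ofPred_eq,
      Prod.map_fst, Prod.map_snd] at hxy ⊢
    rw [← hf.2, hxy]
  · exact (hf.1.1.prodMap hf.1.1).injOn

theorem not_quandleIsoAut_of_card_fixedPairs_lt [Fintype A] [DecidableEq A] [Fintype B]
    [DecidableEq B] {φ : A ≃+ A} {ψ : B ≃+ B}
    (h : (fixedPairs ψ).card < (fixedPairs φ).card) : ¬ QuandleIsoAut φ ψ := by
  rintro ⟨f, hf⟩
  exact (IsAlexanderQuandleIso.card_fixedPairs_le hf).not_gt h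

theorem IsAlexanderQuandleIso.quandleIsoMod {V M : Type} [AddCommGroup V] [AddCommGroup M]
    [Module (ZMod 2)[T;T⁻¹] M] {φ : A ≃+ A} {σ : V → V} {f : A → V}
    (hf : IsAlexanderQuandleIso φ σ f) (e : V ≃+ M)
    (he : ∀ v, e (σ v) = (T 1 : (ZMod 2)[T;T⁻¹]) • e v) : QuandleIsoMod φ M := by
  refine ⟨e ∘ f, e.bijective.comp hf.1, fun x y => ?_⟩
  simp only [Function.comp_apply, hf.2, map_sub, map_add, he, sub_smul, one_smul]
  abel

end AlexanderQuandle

section ZModFourProdZModTwo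

open Matrix

def mapOfGens {m n : ℕ} {B : Type} [AddCommMonoid B] (a b : B) (x : ZMod m × ZMod n) : B :=
  x.1.val • a + x.2.val • b

theorem AddMonoidHom.coe_eq_mapOfGens {m n : ℕ} [NeZero m] [NeZero n] {B : Type}
    [AddCommMonoid B] (φ : ZMod m × ZMod n →+ B) : ⇑φ = mapOfGens (φ (1, 0)) (φ (0, 1)) := by
  funext ⟨a, b⟩
  have hab : ((a, b) : ZMod m × ZMod n) = a.val • (1, 0) + b.val • (0, 1) := by
    ext <;> simp
  rw [hab, map_add, map_nsmul, map_nsmul]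
  simp [mapOfGens]

noncomputable def shearAut : (ZMod 4 × ZMod 2) ≃+ (ZMod 4 × ZMod 2) :=
  AddEquiv.ofBijective (AddMonoidHom.mk' (mapOfGens (1, 1) (0, 1)) (by decide)) (by decide)

noncomputable def rotationAut : (ZMod 4 × ZMod 2) ≃+ (ZMod 4 × ZMod 2) :=
  AddEquiv.ofBijective (AddMonoidHom.mk' (mapOfGens (1, 1) (2, 1)) (by decide)) (by decide)

def toBits (x : ZMod 4 × ZMod 2) : Fin 3 → ZMod 2 :=
  ![(x.1.val : ZMod 2), (x.1.val / 2 : ℕ), x.2]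

def ofBits (v : Fin 3 → ZMod 2) : ZMod 4 × ZMod 2 := (((v 0).val + 2 * (v 1).val : ℕ), v 2)

def bitLinear (M : Matrix (Fin 3) (Fin 3) (ZMod 2)) (x : ZMod 4 × ZMod 2) : ZMod 4 × ZMod 2 :=
  ofBits (M *ᵥ toBits x)

-- found by a search through `GL₃(𝔽₂)`
def isoWitnesses : List (Matrix (Fin 3) (Fin 3) (ZMod 2)) :=
  [1, !![0, 0, 1; 0, 1, 0; 1, 0, 0], !![0, 0, 1; 1, 0, 0; 0, 1, 0], !![1, 0, 0; 0, 0, 1; 0, 1, 0],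
    !![1, 0, 1; 0, 0, 1; 0, 1, 0], !![1, 0, 0; 0, 1, 1; 0, 0, 1], !![1, 0, 0; 0, 1, 0; 1, 0, 1]]

theorem exists_bitLinear_iso : ∀ a b : ZMod 4 × ZMod 2,
    Function.Injective (mapOfGens a b : ZMod 4 × ZMod 2 → _) →
    (∀ x y : ZMod 4 × ZMod 2, mapOfGens a b (x + y) = mapOfGens a b x + mapOfGens a b y) →
    ∃ M ∈ isoWitnesses, IsAlexanderQuandleIso (mapOfGens a b) id (bitLinear M) ∨
      IsAlexanderQuandleIso (mapOfGens a b) shearAut (bitLinear M) ∨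
      IsAlexanderQuandleIso (mapOfGens a b) rotationAut (bitLinear M) := by
  decide

theorem quandleIsoAut_trichotomy (φ : (ZMod 4 × ZMod 2) ≃+ (ZMod 4 × ZMod 2)) :
    QuandleIsoAut φ (AddEquiv.refl (ZMod 4 × ZMod 2)) ∨ QuandleIsoAut φ shearAut ∨
      QuandleIsoAut φ rotationAut := by
  have hφ : ⇑φ = mapOfGens (φ (1, 0)) (φ (0, 1)) := φ.toAddMonoidHom.coe_eq_mapOfGens
  obtain ⟨M, -, h⟩ := exists_bitLinear_iso _ _ (hφ ▸ φ.injective) (hφ ▸ map_add φ)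
  simp only [quandleIsoAut_iff]
  rw [hφ]
  exact h.imp (⟨_, ·⟩) (Or.imp (⟨_, ·⟩) (⟨_, ·⟩))

theorem shearAut_quandleIsoMod : QuandleIsoMod shearAut (LQ1 × LQ2) := by
  obtain ⟨e₁, he₁⟩ := exists_addEquiv_LQ1
  obtain ⟨e₂, he₂⟩ := exists_addEquiv_LQ2
  exact IsAlexanderQuandleIso.quandleIsoMod
    (σ := Prod.map (fun v => ![-v 0]) (fun v => ![-v 1, v 0]))
    (f := fun x => (![toBits x 1], ![toBits x 2, toBits x 0 + toBits x 2])) (by decide)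
    (e₁.prodCongr e₂) fun v => Prod.ext (he₁ v.1) (he₂ v.2)

theorem rotationAut_quandleIsoMod : QuandleIsoMod rotationAut LQ3 := by
  obtain ⟨e, he⟩ := exists_addEquiv_LQ3
  exact IsAlexanderQuandleIso.quandleIsoMod (σ := fun v => ![-v 2, v 0 - v 2, v 1 - v 2])
    (f := fun x => !![0, 1, 0; 1, 0, 1; 0, 1, 1] *ᵥ toBits x) (by decide) e he

end ZModFourProdZModTwo

/-- There are exactly three isomorphism classes of Alexander quandle structures
on the abelian group `ℤ/4 ⊕ ℤ/2`: the trivial quandle (`t` acting as the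
identity); one given by the automorphism `φ₂` with `φ₂(1,0) = (1,1)`,
`φ₂(0,1) = (0,1)`, isomorphic to `Λ₂/(t+1) ⊕ Λ₂/(t²+1)`; and one given by the
automorphism `φ₃` with `φ₃(1,0) = (1,1)`, `φ₃(0,1) = (2,1)`, isomorphic to
`Λ₂/(t³+t²+t+1)`. -/
theorem alexander_quandles_on_Z4_Z2 :
    ∃ φ₂ φ₃ : (ZMod 4 × ZMod 2) ≃+ (ZMod 4 × ZMod 2),
      φ₂ (1, 0) = (1, 1) ∧ φ₂ (0, 1) = (0, 1) ∧
      φ₃ (1, 0) = (1, 1) ∧ φ₃ (0, 1) = (2, 1) ∧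
      (∀ φ : (ZMod 4 × ZMod 2) ≃+ (ZMod 4 × ZMod 2),
        QuandleIsoAut φ (AddEquiv.refl (ZMod 4 × ZMod 2)) ∨
        QuandleIsoAut φ φ₂ ∨ QuandleIsoAut φ φ₃) ∧
      ¬ QuandleIsoAut (AddEquiv.refl (ZMod 4 × ZMod 2)) φ₂ ∧
      ¬ QuandleIsoAut (AddEquiv.refl (ZMod 4 × ZMod 2)) φ₃ ∧
      ¬ QuandleIsoAut φ₂ φ₃ ∧
      QuandleIsoMod φ₂ (LQ1 × LQ2) ∧
      QuandleIsoMod φ₃ LQ3 := by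
  refine ⟨shearAut, rotationAut, rfl, rfl, rfl, rfl, quandleIsoAut_trichotomy,
    not_quandleIsoAut_of_card_fixedPairs_lt (by decide),
    not_quandleIsoAut_of_card_fixedPairs_lt (by decide),
    not_quandleIsoAut_of_card_fixedPairs_lt (by decide),
    shearAut_quandleIsoMod, rotationAut_quandleIsoMod⟩
end
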